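/- arXiv:2505.12436 — 2 statements merged into one kernel-verified Lean document; each statement's English description precedes it below -/
import Mathlib

section
/- Let T₁ and T₂ be compatible TTSBs, and let r ∈ S₁ and s ∈ S₂ with r ♥ s. Then the state r‖s of T₁‖T₂ is committed if and only if r is committed or s is committed: Comm(r‖s) ⟺ Comm(r) ∨ Comm(s). -/
open Classical

noncomputable section

namespace TTSBpaper

/-! ### Partial functions / valuations -/

/-- The domain of a partial function. -/
def dom {α β : Type*} (f : α → Option β) : Set α := {x | f x ≠ none}

/-- The override operator. -/
def override {α β : Type*} (f g : α → Option β) : α → Option β :=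
  fun x => if x ∈ dom f then f x else g x

/-- Restriction of a partial function to a set. -/
def restrictV {α β : Type*} (f : α → Option β) (X : Set α) : α → Option β :=
  fun x => if x ∈ X then f x else none

/-- Compatibility of partial functions. -/
def compatV {α β : Type*} (f g : α → Option β) : Prop :=
  ∀ x ∈ dom f ∩ dom g, f x = g x

/-- Update of f according to g. -/
def updV {α β : Type*} (f g : α → Option β) : α → Option β :=
  restrictV (override g f) (dom f)

/-- A property P (a set of valuations over V) does not depend on the variables in W. -/
def indep {α β : Type*} (V W : Set α) (P : Set (α → Option β)) : Prop :=
  ∀ v u, dom v = V → dom u = W → (v ∈ P ↔ updV v u ∈ P)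

variable {Var Data BCh CCh : Type}

/-- Values: nonnegative reals for clocks, plus arbitrary data. -/
abbrev Value (Data : Type) : Type := NNReal ⊕ Data

/-- Valuations over a universal set of variables, as partial functions. -/
abbrev Valn (Var Data : Type) : Type := Var → Option (Value Data)

/-- Singleton valuation. -/
def single (x : Var) (v : Value Data) : Valn Var Data :=
  fun y => if y = x then some v else none

/-- Time shift v ⊕ d : all clocks (variables in X) advance by d. -/
def oplus (X : Set Var) (v : Valn Var Data) (d : NNReal) : Valn Var Data :=
  fun y => if y ∈ X then (v y).map (Sum.map (fun r => r + d) id) else v y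

/-- A property is left-closed w.r.t. time passage. -/
def leftClosed (X : Set Var) (P : Set (Valn Var Data)) : Prop :=
  ∀ v d, oplus X v d ∈ P → v ∈ P

/-! ### Actions -/

/-- Actions: broadcast output/input, binary output/input, internal, and time passage. -/
inductive Act (BCh CCh : Type) : Type where
  | bsend : BCh → Act BCh CCh
  | brecv : BCh → Act BCh CCh
  | send : CCh → Act BCh CCh
  | recv : CCh → Act BCh CCh
  | tau : Act BCh CCh
  | delay : NNReal → Act BCh CCh

/-- Binary actions. -/
def Act.isBinary : Act BCh CCh → Prop
  | .send _ => True
  | .recv _ => True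
  | _ => False

/-- Binary or broadcast actions. -/
def Act.isSync : Act BCh CCh → Prop
  | .send _ => True
  | .recv _ => True
  | .bsend _ => True
  | .brecv _ => True
  | _ => False

/-- Actions removed by restriction to channel sets Cb, Cc. -/
def Act.removedBy (Cb : Set BCh) (Cc : Set CCh) : Act BCh CCh → Prop
  | .brecv d => d ∈ Cb
  | .send c => c ∈ Cc
  | .recv c => c ∈ Cc
  | _ => False

/-- Actions whose label is kept unchanged by restriction to channel sets Cb, Cc. -/
def Act.keptBy (Cb : Set BCh) (Cc : Set CCh) : Act BCh CCh → Prop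
  | .bsend d => d ∉ Cb
  | .brecv d => d ∉ Cb
  | .send c => c ∉ Cc
  | .recv c => c ∉ Cc
  | _ => True

/-! ### Timed transition systems with broadcast actions -/

/-- The data of a TTSB: external/internal variables, states, initial state and
committed (`true`) / uncommitted (`false`) transition relations. -/
structure PreTTSB (Var Data BCh CCh : Type) : Type where
  E : Set Var
  H : Set Var
  S : Set (Valn Var Data)
  init : Valn Var Data
  Tr : Bool → Valn Var Data → Act BCh CCh → Valn Var Data → Prop

/-- The variables of a TTSB. -/
def PreTTSB.V (T : PreTTSB Var Data BCh CCh) : Set Var := T.E ∪ T.H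

/-- A state is committed iff some committed transition starts in it. -/
def PreTTSB.Comm (T : PreTTSB Var Data BCh CCh) (s : Valn Var Data) : Prop :=
  ∃ a t, T.Tr true s a t

/-- `T` is a timed transition system with broadcast actions (with clock set `X`):
well-formedness plus Axioms I–VI of the paper. -/
structure IsTTSB (X : Set Var) (T : PreTTSB Var Data BCh CCh) : Prop where
  disjEH : Disjoint T.E T.H
  statesDom : ∀ s ∈ T.S, dom s = T.V
  initMem : T.init ∈ T.S
  trMem : ∀ {b s a t}, T.Tr b s a t → s ∈ T.S ∧ t ∈ T.S
  trDisj : ∀ s a t, ¬ (T.Tr true s a t ∧ T.Tr false s a t)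
  axI : ∀ {s a t b a' t'}, T.Tr true s a t → T.Tr b s a' t' →
      a'.isSync ∨ (a' = Act.tau ∧ b = true)
  axII : ∀ {s} (u : Valn Var Data), s ∈ T.S → dom u = T.E → updV s u ∈ T.S
  axIIIc : ∀ {b s t} (u : Valn Var Data) (c : CCh), dom u = T.E →
      T.Tr b s (Act.recv c) t → ∃ t', T.Tr b (updV s u) (Act.recv c) t'
  axIIIb : ∀ {b s t} (u : Valn Var Data) (d : BCh), dom u = T.E →
      T.Tr b s (Act.brecv d) t → ∃ t', T.Tr b (updV s u) (Act.brecv d) t'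
  axIV : ∀ {s d t}, T.Tr false s (Act.delay d) t → t = oplus X s d
  axV : ∀ (d : BCh), ∀ s ∈ T.S, ∃ b t, T.Tr b s (Act.brecv d) t
  axVI : ∀ {b s t} (d : BCh), T.Tr b s (Act.brecv d) t →
      restrictV s T.E = restrictV t T.E

/-- Compatibility of two TTSBs. -/
def Compatible (T1 T2 : PreTTSB Var Data BCh CCh) : Prop :=
  T1.H ∩ T2.V = ∅ ∧ T2.H ∩ T1.V = ∅ ∧ compatV T1.init T2.init

/-- Comparability of two TTSBs. -/
def Comparable (T1 T2 : PreTTSB Var Data BCh CCh) : Prop := T1.E = T2.E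

/-- The transition relations of the parallel composition of two TTSBs
(rules EXT, TAU, SYNC, TIME, SND, RCV of the paper, in both directions). -/
inductive ParTr (T1 T2 : PreTTSB Var Data BCh CCh) :
    Bool → Valn Var Data → Act BCh CCh → Valn Var Data → Prop where
  | ext₁ {r s r' : Valn Var Data} {a : Act BCh CCh} {b : Bool}
      (hr : r ∈ T1.S) (hs : s ∈ T2.S) (hc : compatV r s)
      (ha : a.isBinary) (ht : T1.Tr b r a r') :
      ParTr T1 T2 b (override r s) a (override r' s)
  | ext₂ {r s s' : Valn Var Data} {a : Act BCh CCh} {b : Bool}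
      (hr : r ∈ T1.S) (hs : s ∈ T2.S) (hc : compatV r s)
      (ha : a.isBinary) (ht : T2.Tr b s a s') :
      ParTr T1 T2 b (override r s) a (override s' r)
  | tau₁ {r s r' : Valn Var Data} {b : Bool}
      (hr : r ∈ T1.S) (hs : s ∈ T2.S) (hc : compatV r s)
      (ht : T1.Tr b r Act.tau r') (hcm : T2.Comm s → b = true) :
      ParTr T1 T2 b (override r s) Act.tau (override r' s)
  | tau₂ {r s s' : Valn Var Data} {b : Bool}
      (hr : r ∈ T1.S) (hs : s ∈ T2.S) (hc : compatV r s)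
      (ht : T2.Tr b s Act.tau s') (hcm : T1.Comm r → b = true) :
      ParTr T1 T2 b (override r s) Act.tau (override s' r)
  | sync₁ {r s r' s' : Valn Var Data} {c : CCh} {b b' : Bool}
      (hr : r ∈ T1.S) (hs : s ∈ T2.S) (hc : compatV r s)
      (ht1 : T1.Tr b r (Act.send c) r') (ht2 : T2.Tr b' (updV s r') (Act.recv c) s')
      (hcm : (T1.Comm r ∨ T2.Comm s) → (b || b') = true) :
      ParTr T1 T2 (b || b') (override r s) Act.tau (override s' r')
  | sync₂ {r s r' s' : Valn Var Data} {c : CCh} {b b' : Bool}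
      (hr : r ∈ T1.S) (hs : s ∈ T2.S) (hc : compatV r s)
      (ht1 : T2.Tr b s (Act.send c) s') (ht2 : T1.Tr b' (updV r s') (Act.recv c) r')
      (hcm : (T2.Comm s ∨ T1.Comm r) → (b || b') = true) :
      ParTr T1 T2 (b || b') (override r s) Act.tau (override r' s')
  | time₁ {r s r' s' : Valn Var Data} {d : NNReal}
      (hr : r ∈ T1.S) (hs : s ∈ T2.S) (hc : compatV r s)
      (ht1 : T1.Tr false r (Act.delay d) r') (ht2 : T2.Tr false s (Act.delay d) s') :
      ParTr T1 T2 false (override r s) (Act.delay d) (override r' s')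
  | time₂ {r s r' s' : Valn Var Data} {d : NNReal}
      (hr : r ∈ T1.S) (hs : s ∈ T2.S) (hc : compatV r s)
      (ht1 : T2.Tr false s (Act.delay d) s') (ht2 : T1.Tr false r (Act.delay d) r') :
      ParTr T1 T2 false (override r s) (Act.delay d) (override s' r')
  | snd₁ {r s r' s' : Valn Var Data} {δ : BCh} {b b' : Bool}
      (hr : r ∈ T1.S) (hs : s ∈ T2.S) (hc : compatV r s)
      (ht1 : T1.Tr b r (Act.bsend δ) r') (ht2 : T2.Tr b' (updV s r') (Act.brecv δ) s') :
      ParTr T1 T2 (b || b') (override r s) (Act.bsend δ) (override r' s')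
  | snd₂ {r s r' s' : Valn Var Data} {δ : BCh} {b b' : Bool}
      (hr : r ∈ T1.S) (hs : s ∈ T2.S) (hc : compatV r s)
      (ht1 : T2.Tr b s (Act.bsend δ) s') (ht2 : T1.Tr b' (updV r s') (Act.brecv δ) r') :
      ParTr T1 T2 (b || b') (override r s) (Act.bsend δ) (override s' r')
  | rcv₁ {r s r' s' : Valn Var Data} {δ : BCh} {b b' : Bool}
      (hr : r ∈ T1.S) (hs : s ∈ T2.S) (hc : compatV r s)
      (ht1 : T1.Tr b r (Act.brecv δ) r') (ht2 : T2.Tr b' s (Act.brecv δ) s') :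
      ParTr T1 T2 (b || b') (override r s) (Act.brecv δ) (override r' s')
  | rcv₂ {r s r' s' : Valn Var Data} {δ : BCh} {b b' : Bool}
      (hr : r ∈ T1.S) (hs : s ∈ T2.S) (hc : compatV r s)
      (ht1 : T2.Tr b s (Act.brecv δ) s') (ht2 : T1.Tr b' r (Act.brecv δ) r') :
      ParTr T1 T2 (b || b') (override r s) (Act.brecv δ) (override s' r')

/-- Parallel composition of TTSBs. -/
def par (T1 T2 : PreTTSB Var Data BCh CCh) : PreTTSB Var Data BCh CCh where
  E := T1.E ∪ T2.E
  H := T1.H ∪ T2.H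
  S := {v | ∃ r ∈ T1.S, ∃ s ∈ T2.S, compatV r s ∧ v = override r s}
  init := override T1.init T2.init
  Tr := ParTr T1 T2

/-- n-ary (left-associated) parallel composition. -/
def parAll (T : PreTTSB Var Data BCh CCh) (Ts : List (PreTTSB Var Data BCh CCh)) :
    PreTTSB Var Data BCh CCh :=
  Ts.foldl par T

/-- The restriction operator on TTSBs: channels in Cb/Cc and external variables in Ce
are internalized, following Definition 10 of the paper. -/
def restr (T : PreTTSB Var Data BCh CCh) (Cb : Set BCh) (Cc : Set CCh) (Ce : Set Var) :
    PreTTSB Var Data BCh CCh where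
  E := T.E \ Ce
  H := T.H ∪ (T.E ∩ Ce)
  S := T.S
  init := T.init
  Tr := fun b s a t =>
    (T.Tr b s a t ∧ Act.keptBy Cb Cc a) ∨
    (a = Act.tau ∧ ∃ δ ∈ Cb, T.Tr b s (Act.bsend δ) t ∧ (T.Comm s → b = true))

/-- Broadcast channels enabled in the transitions of T. -/
def enabledB (T : PreTTSB Var Data BCh CCh) : Set BCh :=
  {δ | ∃ b s t, T.Tr b s (Act.bsend δ) t ∨ T.Tr b s (Act.brecv δ) t}

/-- Binary channels enabled in the transitions of T. -/
def enabledC (T : PreTTSB Var Data BCh CCh) : Set CCh :=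
  {c | ∃ b s t, T.Tr b s (Act.send c) t ∨ T.Tr b s (Act.recv c) t}

/-! ### Timed step simulation -/

/-- R is a timed step simulation from T1 to T2 (Definition 11 of the paper). -/
structure IsTimedStepSim (T1 T2 : PreTTSB Var Data BCh CCh)
    (R : Valn Var Data → Valn Var Data → Prop) : Prop where
  mem : ∀ {r s}, R r s → r ∈ T1.S ∧ s ∈ T2.S
  initR : R T1.init T2.init
  extEq : ∀ {r s}, R r s → restrictV r T1.E = restrictV s T2.E
  updR : ∀ {r s} (u : Valn Var Data), R r s → dom u = T1.E → R (updV r u) (updV s u)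
  commR : ∀ {r s}, R r s → T2.Comm s → T1.Comm r
  stepR : ∀ {r s b a r'}, R r s → T1.Tr b r a r' →
      (∃ s', T2.Tr b s a s' ∧ R r' s') ∨ (a = Act.tau ∧ R r' s)

/-- T1 ≼ T2 : some timed step simulation from T1 to T2 exists. -/
def simLE (T1 T2 : PreTTSB Var Data BCh CCh) : Prop :=
  ∃ R, IsTimedStepSim T1 T2 R

/-! ### Timed automata -/

/-- Edge labels of timed automata (actions without time passage). -/
inductive ELab (BCh CCh : Type) : Type where
  | bsend : BCh → ELab BCh CCh
  | brecv : BCh → ELab BCh CCh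
  | send : CCh → ELab BCh CCh
  | recv : CCh → ELab BCh CCh
  | tau : ELab BCh CCh

/-- Edge labels as actions. -/
def ELab.toAct : ELab BCh CCh → Act BCh CCh
  | .bsend δ => .bsend δ
  | .brecv δ => .brecv δ
  | .send c => .send c
  | .recv c => .recv c
  | .tau => .tau

/-- A timed automaton: locations (a set of data values), committed locations, initial
location, external/internal variables, initial valuation, invariants, transitions
(location, guard, action, update function, location) and urgent transitions. -/
structure TA (Var Data BCh CCh : Type) : Type where
  L : Set Data
  K : Set Data
  l0 : Data
  E : Set Var
  H : Set Var
  v0 : Valn Var Data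
  Inv : Data → Set (Valn Var Data)
  Tr : Data → Set (Valn Var Data) → ELab BCh CCh →
      (Valn Var Data → Valn Var Data) → Data → Prop
  UTr : Data → Set (Valn Var Data) → ELab BCh CCh →
      (Valn Var Data → Valn Var Data) → Data → Prop

/-- The variables of a timed automaton. -/
def TA.V (A : TA Var Data BCh CCh) : Set Var := A.E ∪ A.H

/-- Well-formedness of a timed automaton, together with Axioms VII–XI of the paper
(clock set X). -/
structure TAok (X : Set Var) (A : TA Var Data BCh CCh) : Prop where
  disjEH : Disjoint A.E A.H
  l0mem : A.l0 ∈ A.L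
  Ksub : A.K ⊆ A.L
  v0dom : dom A.v0 = A.V
  v0inv : restrictV A.v0 A.V ∈ A.Inv A.l0
  invLC : ∀ l, leftClosed X (A.Inv l)
  urgSub : ∀ {l g a ρ l'}, A.UTr l g a ρ l' → A.Tr l g a ρ l'
  trLoc : ∀ {l g a ρ l'}, A.Tr l g a ρ l' → l ∈ A.L ∧ l' ∈ A.L
  updDom : ∀ {l g a ρ l'}, A.Tr l g a ρ l' → ∀ v, dom v = A.V → dom (ρ v) = A.V
  axVII : ∀ l, indep A.V A.E (A.Inv l)
  axVIIIc : ∀ {l g ρ l'} (c : CCh), A.Tr l g (ELab.recv c) ρ l' → indep A.V A.E g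
  axVIIIb : ∀ {l g ρ l'} (δ : BCh), A.Tr l g (ELab.brecv δ) ρ l' → indep A.V A.E g
  axIX : ∀ {l}, l ∈ A.K → ∀ v, dom v = A.V → v ∈ A.Inv l →
      ∃ g a ρ l', A.Tr l g a ρ l' ∧ v ∈ g ∧ ρ v ∈ A.Inv l'
  axX : ∀ {l g a ρ l'}, A.UTr l g a ρ l' → a = ELab.tau ∧ indep A.V (A.V ∩ X) g
  axXI : ∀ {l g ρ l'} (δ : BCh), A.Tr l g (ELab.brecv δ) ρ l' →
      ∀ v, restrictV (ρ v) A.E = restrictV v A.E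

/-- States of the TTSB associated to a TA with location variable ℓ. -/
def taState (A : TA Var Data BCh CCh) (ℓ : Var) : Set (Valn Var Data) :=
  {v | dom v = A.V ∪ {ℓ} ∧
    ∃ l ∈ A.L, v ℓ = some (Sum.inr l) ∧ restrictV v A.V ∈ A.Inv l}

/-- Application of an update function ρ : Val(V) → Val(V) to a larger state. -/
def applyU (A : TA Var Data BCh CCh) (ρ : Valn Var Data → Valn Var Data)
    (s : Valn Var Data) : Valn Var Data :=
  updV s (ρ (restrictV s A.V))

/-- The transition relations of the TTSB associated to a TA
(rules ACT, TIME and VIRT of the paper). -/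
inductive TATrans (X : Set Var) (A : TA Var Data BCh CCh) (ℓ : Var) :
    Bool → Valn Var Data → Act BCh CCh → Valn Var Data → Prop where
  | act {s : Valn Var Data} {l : Data} {g : Set (Valn Var Data)} {a : ELab BCh CCh}
      {ρ : Valn Var Data → Valn Var Data} {l' : Data} {b : Bool}
      (hs : s ∈ taState A ℓ) (hl : s ℓ = some (Sum.inr l))
      (ht : A.Tr l g a ρ l') (hg : restrictV s A.V ∈ g)
      (hb : b = true ↔ l ∈ A.K)
      (hs' : updV (applyU A ρ s) (single ℓ (Sum.inr l')) ∈ taState A ℓ) :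
      TATrans X A ℓ b s a.toAct (updV (applyU A ρ s) (single ℓ (Sum.inr l')))
  | time {s : Valn Var Data} {l : Data} {d : NNReal}
      (hs : s ∈ taState A ℓ) (hl : s ℓ = some (Sum.inr l)) (hK : l ∉ A.K)
      (hs' : oplus X s d ∈ taState A ℓ)
      (hurg : ∀ d' : NNReal, d' ≤ d → ∀ g ρ l', A.UTr l g ELab.tau ρ l' →
          restrictV (oplus X s d') A.V ∉ g) :
      TATrans X A ℓ false s (Act.delay d) (oplus X s d)
  | virt {s : Valn Var Data} {l : Data} (δ : BCh)
      (hs : s ∈ taState A ℓ) (hl : s ℓ = some (Sum.inr l))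
      (hno : ∀ g ρ l', A.Tr l g (ELab.brecv δ) ρ l' → restrictV s A.V ∉ g) :
      TATrans X A ℓ false s (Act.brecv δ) s

/-- The TTSB associated to a timed automaton. -/
def TTSBof (X : Set Var) (A : TA Var Data BCh CCh) (ℓ : Var) :
    PreTTSB Var Data BCh CCh where
  E := A.E
  H := A.H ∪ {ℓ}
  S := taState A ℓ
  init := override A.v0 (single ℓ (Sum.inr A.l0))
  Tr := TATrans X A ℓ

/-! ### Networks of timed automata and their non-compositional semantics -/

/-- A network component: a timed automaton together with its (fresh) location variable. -/
abbrev Comp (Var Data BCh CCh : Type) : Type := TA Var Data BCh CCh × Var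

/-- The variables of a component, including its location variable. -/
def compW (c : Comp Var Data BCh CCh) : Set Var := c.1.V ∪ {c.2}

/-- The TTSB associated to a component. -/
def TTSBofC (X : Set Var) (c : Comp Var Data BCh CCh) : PreTTSB Var Data BCh CCh :=
  TTSBof X c.1 c.2

/-- All variables of a network. -/
def NTAvars (N : List (Comp Var Data BCh CCh)) : Set Var :=
  {x | ∃ c ∈ N, x ∈ compW c}

/-- The states of the non-compositional (UPPAAL) semantics of a network. -/
def NTAstates (N : List (Comp Var Data BCh CCh)) : Set (Valn Var Data) :=
  {v | dom v = NTAvars N ∧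
    ∀ c ∈ N, ∃ l ∈ c.1.L, v c.2 = some (Sum.inr l) ∧ restrictV v c.1.V ∈ c.1.Inv l}

/-- The initial state of the non-compositional semantics of a network. -/
def NTAinit (N : List (Comp Var Data BCh CCh)) : Valn Var Data :=
  N.foldr (fun c w => override (override c.1.v0 (single c.2 (Sum.inr c.1.l0))) w)
    (fun _ => none)

/-- A component is in a committed location at state s. -/
def atCommitted (c : Comp Var Data BCh CCh) (s : Valn Var Data) : Prop :=
  ∃ l ∈ c.1.K, s c.2 = some (Sum.inr l)

/-- No component of the network is in a committed location. -/
def noneCommitted (N : List (Comp Var Data BCh CCh)) (s : Valn Var Data) : Prop :=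
  ∀ c ∈ N, ¬ atCommitted c s

/-- Application of a component update function to a network state. -/
def applyC (c : Comp Var Data BCh CCh) (ρ : Valn Var Data → Valn Var Data)
    (s : Valn Var Data) : Valn Var Data :=
  updV s (ρ (restrictV s c.1.V))

/-- j ∈ RS(δ, i, s): component j (≠ i) has an executable δ?-transition in s. -/
def RSmem (N : List (Comp Var Data BCh CCh)) (δ : BCh) (i : ℕ) (s : Valn Var Data)
    (j : ℕ) : Prop :=
  j ≠ i ∧ ∃ (hj : j < N.length), ∃ l g ρ l',
    s (N.get ⟨j, hj⟩).2 = some (Sum.inr l) ∧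
    (N.get ⟨j, hj⟩).1.Tr l g (ELab.brecv δ) ρ l' ∧
    restrictV s (N.get ⟨j, hj⟩).1.V ∈ g

/-- Apply the chosen receiver updates in index order (left-to-right). -/
def bcastUpds (N : List (Comp Var Data BCh CCh)) (δ : BCh) (i : ℕ) (s0 : Valn Var Data)
    (ρs : ℕ → Valn Var Data → Valn Var Data) (v : Valn Var Data) : Valn Var Data :=
  (List.range N.length).foldl
    (fun w j =>
      if hj : j < N.length then
        if RSmem N δ i s0 j then applyC (N.get ⟨j, hj⟩) (ρs j) w else w
      else w) v

/-- Update the location variables of all receivers. -/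
def bcastLocs (N : List (Comp Var Data BCh CCh)) (δ : BCh) (i : ℕ) (s0 : Valn Var Data)
    (ls' : ℕ → Data) (v : Valn Var Data) : Valn Var Data :=
  (List.range N.length).foldl
    (fun w j =>
      if hj : j < N.length then
        if RSmem N δ i s0 j then
          updV w (single (N.get ⟨j, hj⟩).2 (Sum.inr (ls' j)))
        else w
      else w) v

/-- The non-compositional (UPPAAL) transition relation of a network
(rules TAU, SYNC, TIME and BCST of the paper). -/
inductive NTATr (X : Set Var) (N : List (Comp Var Data BCh CCh)) :
    Valn Var Data → Act BCh CCh → Valn Var Data → Prop where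
  | tau {s : Valn Var Data} {i : ℕ} (hi : i < N.length)
      {l : Data} {g : Set (Valn Var Data)} {ρ : Valn Var Data → Valn Var Data} {l' : Data}
      (hs : s ∈ NTAstates N)
      (hl : s (N.get ⟨i, hi⟩).2 = some (Sum.inr l))
      (ht : (N.get ⟨i, hi⟩).1.Tr l g ELab.tau ρ l')
      (hg : restrictV s (N.get ⟨i, hi⟩).1.V ∈ g)
      (hcomm : noneCommitted N s ∨ l ∈ (N.get ⟨i, hi⟩).1.K)
      (hs' : updV (applyC (N.get ⟨i, hi⟩) ρ s)
          (single (N.get ⟨i, hi⟩).2 (Sum.inr l')) ∈ NTAstates N) :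
      NTATr X N s Act.tau
        (updV (applyC (N.get ⟨i, hi⟩) ρ s) (single (N.get ⟨i, hi⟩).2 (Sum.inr l')))
  | sync {s : Valn Var Data} {i j : ℕ} (hi : i < N.length) (hj : j < N.length)
      (hij : i ≠ j) {li lj li' lj' : Data} {gi gj : Set (Valn Var Data)}
      {ρi ρj : Valn Var Data → Valn Var Data} {c : CCh}
      (hs : s ∈ NTAstates N)
      (hli : s (N.get ⟨i, hi⟩).2 = some (Sum.inr li))
      (hlj : s (N.get ⟨j, hj⟩).2 = some (Sum.inr lj))
      (hti : (N.get ⟨i, hi⟩).1.Tr li gi (ELab.send c) ρi li')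
      (htj : (N.get ⟨j, hj⟩).1.Tr lj gj (ELab.recv c) ρj lj')
      (hgi : restrictV s (N.get ⟨i, hi⟩).1.V ∈ gi)
      (hgj : restrictV s (N.get ⟨j, hj⟩).1.V ∈ gj)
      (hcomm : noneCommitted N s ∨ li ∈ (N.get ⟨i, hi⟩).1.K ∨ lj ∈ (N.get ⟨j, hj⟩).1.K)
      (hs' : updV (updV (applyC (N.get ⟨j, hj⟩) ρj (applyC (N.get ⟨i, hi⟩) ρi s))
          (single (N.get ⟨i, hi⟩).2 (Sum.inr li')))
          (single (N.get ⟨j, hj⟩).2 (Sum.inr lj')) ∈ NTAstates N) :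
      NTATr X N s Act.tau
        (updV (updV (applyC (N.get ⟨j, hj⟩) ρj (applyC (N.get ⟨i, hi⟩) ρi s))
          (single (N.get ⟨i, hi⟩).2 (Sum.inr li')))
          (single (N.get ⟨j, hj⟩).2 (Sum.inr lj')))
  | time {s : Valn Var Data} {d : NNReal}
      (hs : s ∈ NTAstates N) (hs' : oplus X s d ∈ NTAstates N)
      (hK : noneCommitted N s)
      (hurg : ¬ ∃ (i : ℕ) (hi : i < N.length), ∃ l g ρ l',
          (N.get ⟨i, hi⟩).1.UTr l g ELab.tau ρ l' ∧
          s (N.get ⟨i, hi⟩).2 = some (Sum.inr l) ∧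
          restrictV s (N.get ⟨i, hi⟩).1.V ∈ g) :
      NTATr X N s (Act.delay d) (oplus X s d)
  | bcst {s : Valn Var Data} {i : ℕ} (hi : i < N.length)
      {l l' : Data} {g : Set (Valn Var Data)} {ρ : Valn Var Data → Valn Var Data}
      {δ : BCh} (ρs : ℕ → Valn Var Data → Valn Var Data) (ls' : ℕ → Data)
      (hs : s ∈ NTAstates N)
      (hl : s (N.get ⟨i, hi⟩).2 = some (Sum.inr l))
      (ht : (N.get ⟨i, hi⟩).1.Tr l g (ELab.bsend δ) ρ l')
      (hg : restrictV s (N.get ⟨i, hi⟩).1.V ∈ g)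
      (hrecv : ∀ j (hj : j < N.length), RSmem N δ i s j →
          ∃ lj gj, s (N.get ⟨j, hj⟩).2 = some (Sum.inr lj) ∧
            (N.get ⟨j, hj⟩).1.Tr lj gj (ELab.brecv δ) (ρs j) (ls' j) ∧
            restrictV s (N.get ⟨j, hj⟩).1.V ∈ gj)
      (hcomm : noneCommitted N s ∨ l ∈ (N.get ⟨i, hi⟩).1.K ∨
          ∃ j, ∃ (hj : j < N.length), RSmem N δ i s j ∧
            ∃ lj ∈ (N.get ⟨j, hj⟩).1.K, s (N.get ⟨j, hj⟩).2 = some (Sum.inr lj))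
      (hs' : bcastLocs N δ i s ls'
          (updV (bcastUpds N δ i s ρs (applyC (N.get ⟨i, hi⟩) ρ s))
            (single (N.get ⟨i, hi⟩).2 (Sum.inr l'))) ∈ NTAstates N) :
      NTATr X N s Act.tau
        (bcastLocs N δ i s ls'
          (updV (bcastUpds N δ i s ρs (applyC (N.get ⟨i, hi⟩) ρ s))
            (single (N.get ⟨i, hi⟩).2 (Sum.inr l'))))

/-- Well-formedness of a network: components satisfy Axioms VII–XI, are pairwise
compatible, and the location variables are fresh and pairwise distinct. -/
def NTAok (X : Set Var) (N : List (Comp Var Data BCh CCh)) : Prop :=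
  (∀ c ∈ N, TAok X c.1) ∧
  N.Pairwise (fun c c' => c.1.H ∩ c'.1.V = ∅ ∧ c'.1.H ∩ c.1.V = ∅ ∧
    compatV c.1.v0 c'.1.v0) ∧
  (∀ c ∈ N, ∀ c' ∈ N, c.2 ∉ c'.1.V) ∧
  N.Pairwise (fun c c' => c.2 ≠ c'.2)

/-- Reachability in the non-compositional semantics of a network. -/
def Reach (X : Set Var) (N : List (Comp Var Data BCh CCh)) (s : Valn Var Data) : Prop :=
  Relation.ReflTransGen (fun u v => ∃ a, NTATr X N u a v) (NTAinit N) s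

/-!
Every rule of `T₁ ‖ T₂` starts from a decomposition `r ‖ s`, which is unique because states of
`Tᵢ` have domain `Vᵢ`. A committed composite transition has a committed premise. If that premise
is an input of `T₂` from `s[r']`, then `s` itself is committed: by compatibility `r'` only
changes external variables of `T₂`, so `s = s[r'][s⌈E₂]` and Axiom III moves the input back to
`s`. Conversely, a committed transition of `r` lifts by EXT or TAU, or by SND / RCV with a
partner input supplied by Axiom V (at the state `s[r']` given by Axiom II); committed delays
do not exist by Axiom I.
-/

section Valuation

variable {α β : Type*}

lemma compatV_comm {f g : α → Option β} : compatV f g ↔ compatV g f :=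
  ⟨fun h x hx => (h x hx.symm).symm, fun h x hx => (h x hx.symm).symm⟩

lemma notMem_dom {f : α → Option β} {x : α} : x ∉ dom f ↔ f x = none := not_not

lemma override_apply (f g : α → Option β) (x : α) :
    override f g x = if x ∈ dom f then f x else g x := rfl

lemma restrictV_apply (f : α → Option β) (E : Set α) (x : α) :
    restrictV f E x = if x ∈ E then f x else none := rfl

lemma updV_apply (f g : α → Option β) (x : α) :
    updV f g x = if x ∈ dom f then (if x ∈ dom g then g x else f x) else none := rfl

lemma dom_updV (f g : α → Option β) : dom (updV f g) = dom f := by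
  ext x
  change updV f g x ≠ none ↔ x ∈ dom f
  by_cases hf : x ∈ dom f
  · by_cases hg : x ∈ dom g
    · rw [updV_apply, if_pos hf, if_pos hg]; exact iff_of_true hg hf
    · rw [updV_apply, if_pos hf, if_neg hg]; exact iff_of_true hf hf
  · rw [updV_apply, if_neg hf]; exact iff_of_false (· rfl) hf

lemma dom_restrictV_of_subset {f : α → Option β} {E : Set α} (hE : E ⊆ dom f) :
    dom (restrictV f E) = E := by
  ext x
  by_cases hx : x ∈ E
  · simpa [restrictV_apply, dom, hx] using hE hx
  · simp [restrictV_apply, dom, hx]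

lemma eq_of_override_eq_override {r s r₀ s₀ : α → Option β}
    (hdr : dom r₀ = dom r) (hds : dom s₀ = dom s)
    (hc : compatV r s) (hc₀ : compatV r₀ s₀)
    (heq : override r₀ s₀ = override r s) : r₀ = r ∧ s₀ = s := by
  have hr : r₀ = r := by
    funext x
    by_cases h : x ∈ dom r
    · simpa [override_apply, h, hdr ▸ h] using congrFun heq x
    · have h₀ : x ∉ dom r₀ := hdr ▸ h
      rw [notMem_dom.mp h, notMem_dom.mp h₀]
  subst hr
  refine ⟨rfl, funext fun x => ?_⟩
  by_cases hs : x ∈ dom s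
  · by_cases hr : x ∈ dom r₀
    · exact (hc₀ x ⟨hr, hds ▸ hs⟩).symm.trans (hc x ⟨hr, hs⟩)
    · simpa [override_apply, hr] using congrFun heq x
  · have hs₀ : x ∉ dom s₀ := hds ▸ hs
    rw [notMem_dom.mp hs, notMem_dom.mp hs₀]

lemma updV_updV_restrictV {s z : α → Option β} {E : Set α}
    (hE : E ⊆ dom s) (hz : dom z ∩ dom s ⊆ E) :
    updV (updV s z) (restrictV s E) = s := by
  funext x
  rw [updV_apply, dom_updV, dom_restrictV_of_subset hE]
  by_cases hs : x ∈ dom s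
  · by_cases hx : x ∈ E
    · simp [hs, hx, restrictV_apply]
    · have hzx : x ∉ dom z := fun h => hx (hz ⟨h, hs⟩)
      simp [hs, hx, hzx, updV_apply]
  · simp [hs, notMem_dom.mp hs]

lemma updV_restrictV_updV {s z : α → Option β} {E : Set α} (hz : dom z ∩ dom s ⊆ E) :
    updV s (restrictV (updV s z) E) = updV s z := by
  funext x
  by_cases hs : x ∈ dom s
  · by_cases hx : x ∈ E
    · have hmem : x ∈ dom (restrictV (updV s z) E) := by
        change restrictV _ E x ≠ none
        rw [restrictV_apply, if_pos hx]
        exact (Set.ext_iff.mp (dom_updV s z) x).mpr hs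
      rw [updV_apply, if_pos hs, if_pos hmem, restrictV_apply, if_pos hx]
    · have hzx : x ∉ dom z := fun h => hx (hz ⟨h, hs⟩)
      have hnot : x ∉ dom (restrictV (updV s z) E) := notMem_dom.mpr (if_neg hx)
      rw [updV_apply, if_pos hs, if_neg hnot, updV_apply, if_pos hs, if_neg hzx]
  · rw [updV_apply, updV_apply, if_neg hs, if_neg hs]

end Valuation

/-- The actions covered by Axiom III. -/
def Act.IsInput : Act BCh CCh → Prop
  | .recv _ => True
  | .brecv _ => True
  | _ => False

namespace IsTTSB

variable {X : Set Var} {T : PreTTSB Var Data BCh CCh}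

lemma exists_tr_updV_of_isInput (h : IsTTSB X T) {b : Bool} {s t u : Valn Var Data}
    {a : Act BCh CCh} (ha : a.IsInput) (hu : dom u = T.E) (ht : T.Tr b s a t) :
    ∃ t', T.Tr b (updV s u) a t' := by
  cases a with
  | recv c => exact h.axIIIc u c hu ht
  | brecv δ => exact h.axIIIb u δ hu ht
  | _ => exact ha.elim

lemma comm_of_tr_true_updV (h : IsTTSB X T) {s z t : Valn Var Data} {a : Act BCh CCh}
    (hs : s ∈ T.S) (hz : dom z ∩ T.V ⊆ T.E) (ht : T.Tr true (updV s z) a t)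
    (ha : a.IsInput) : T.Comm s := by
  have hE : T.E ⊆ dom s := h.statesDom s hs ▸ Set.subset_union_left
  obtain ⟨t', ht'⟩ := h.exists_tr_updV_of_isInput ha (dom_restrictV_of_subset hE) ht
  rw [updV_updV_restrictV hE (h.statesDom s hs ▸ hz)] at ht'
  exact ⟨a, t', ht'⟩

lemma updV_mem (h : IsTTSB X T) {s z : Valn Var Data} (hs : s ∈ T.S)
    (hz : dom z ∩ T.V ⊆ T.E) : updV s z ∈ T.S := by
  have hE : T.E ⊆ dom (updV s z) := by
    rw [dom_updV, h.statesDom s hs]; exact Set.subset_union_left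
  rw [← updV_restrictV_updV (h.statesDom s hs ▸ hz)]
  exact h.axII _ hs (dom_restrictV_of_subset hE)

lemma not_tr_true_delay (h : IsTTSB X T) {s t : Valn Var Data} {d : NNReal} :
    ¬ T.Tr true s (.delay d) t := fun ht => by
  rcases h.axI ht ht with h | ⟨h, -⟩ <;> cases h

end IsTTSB

namespace Compatible

variable {T1 T2 : PreTTSB Var Data BCh CCh}

lemma symm (hc : Compatible T1 T2) : Compatible T2 T1 :=
  ⟨hc.2.1, hc.1, compatV_comm.mp hc.2.2⟩

lemma inter_subset_E_right (hc : Compatible T1 T2) : T1.V ∩ T2.V ⊆ T2.E := by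
  rintro x ⟨hx1, hx2 | hx2⟩
  · exact hx2
  · exact (Set.eq_empty_iff_forall_notMem.mp hc.2.1 x ⟨hx2, hx1⟩).elim

lemma inter_subset_E_left (hc : Compatible T1 T2) : T2.V ∩ T1.V ⊆ T1.E :=
  hc.symm.inter_subset_E_right

end Compatible

section Par

variable {X : Set Var} {T1 T2 : PreTTSB Var Data BCh CCh}

lemma ParTr.exists_comm_of_tr_true (h1 : IsTTSB X T1) (h2 : IsTTSB X T2)
    (hc : Compatible T1 T2) {v t : Valn Var Data} {a : Act BCh CCh}
    (htr : ParTr T1 T2 true v a t) :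
    ∃ r ∈ T1.S, ∃ s ∈ T2.S, compatV r s ∧ v = override r s ∧ (T1.Comm r ∨ T2.Comm s) := by
  have hz1 : ∀ {r'}, r' ∈ T1.S → dom r' ∩ T2.V ⊆ T2.E := fun hr' =>
    h1.statesDom _ hr' ▸ hc.inter_subset_E_right
  have hz2 : ∀ {s'}, s' ∈ T2.S → dom s' ∩ T1.V ⊆ T1.E := fun hs' =>
    h2.statesDom _ hs' ▸ hc.inter_subset_E_left
  generalize hb : true = b at htr
  cases htr with
  | ext₁ hr hs hrs ha ht => exact ⟨_, hr, _, hs, hrs, rfl, .inl ⟨_, _, hb ▸ ht⟩⟩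
  | ext₂ hr hs hrs ha ht => exact ⟨_, hr, _, hs, hrs, rfl, .inr ⟨_, _, hb ▸ ht⟩⟩
  | tau₁ hr hs hrs ht => exact ⟨_, hr, _, hs, hrs, rfl, .inl ⟨_, _, hb ▸ ht⟩⟩
  | tau₂ hr hs hrs ht => exact ⟨_, hr, _, hs, hrs, rfl, .inr ⟨_, _, hb ▸ ht⟩⟩
  | sync₁ hr hs hrs ht1 ht2 =>
    refine ⟨_, hr, _, hs, hrs, rfl, ?_⟩
    rcases Bool.or_eq_true_iff.mp hb.symm with rfl | rfl
    · exact .inl ⟨_, _, ht1⟩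
    · exact .inr (h2.comm_of_tr_true_updV hs (hz1 (h1.trMem ht1).2) ht2 trivial)
  | sync₂ hr hs hrs ht1 ht2 =>
    refine ⟨_, hr, _, hs, hrs, rfl, ?_⟩
    rcases Bool.or_eq_true_iff.mp hb.symm with rfl | rfl
    · exact .inr ⟨_, _, ht1⟩
    · exact .inl (h1.comm_of_tr_true_updV hr (hz2 (h2.trMem ht1).2) ht2 trivial)
  | snd₁ hr hs hrs ht1 ht2 =>
    refine ⟨_, hr, _, hs, hrs, rfl, ?_⟩
    rcases Bool.or_eq_true_iff.mp hb.symm with rfl | rfl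
    · exact .inl ⟨_, _, ht1⟩
    · exact .inr (h2.comm_of_tr_true_updV hs (hz1 (h1.trMem ht1).2) ht2 trivial)
  | snd₂ hr hs hrs ht1 ht2 =>
    refine ⟨_, hr, _, hs, hrs, rfl, ?_⟩
    rcases Bool.or_eq_true_iff.mp hb.symm with rfl | rfl
    · exact .inr ⟨_, _, ht1⟩
    · exact .inl (h1.comm_of_tr_true_updV hr (hz2 (h2.trMem ht1).2) ht2 trivial)
  | rcv₁ hr hs hrs ht1 ht2 =>
    refine ⟨_, hr, _, hs, hrs, rfl, ?_⟩
    rcases Bool.or_eq_true_iff.mp hb.symm with rfl | rfl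
    · exact .inl ⟨_, _, ht1⟩
    · exact .inr ⟨_, _, ht2⟩
  | rcv₂ hr hs hrs ht1 ht2 =>
    refine ⟨_, hr, _, hs, hrs, rfl, ?_⟩
    rcases Bool.or_eq_true_iff.mp hb.symm with rfl | rfl
    · exact .inr ⟨_, _, ht1⟩
    · exact .inl ⟨_, _, ht2⟩
  | time₁ => cases hb
  | time₂ => cases hb

lemma par_comm_of_comm_left (h1 : IsTTSB X T1) (h2 : IsTTSB X T2) (hc : Compatible T1 T2)
    {r s : Valn Var Data} (hr : r ∈ T1.S) (hs : s ∈ T2.S) (hrs : compatV r s)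
    (hcr : T1.Comm r) : (par T1 T2).Comm (override r s) := by
  obtain ⟨a, t, ht⟩ := hcr
  cases a with
  | bsend δ =>
    have hz : dom t ∩ T2.V ⊆ T2.E := h1.statesDom t (h1.trMem ht).2 ▸ hc.inter_subset_E_right
    obtain ⟨b', s', hs'⟩ := h2.axV δ _ (h2.updV_mem hs hz)
    exact ⟨_, _, .snd₁ hr hs hrs ht hs'⟩
  | brecv δ =>
    obtain ⟨b', s', hs'⟩ := h2.axV δ s hs
    exact ⟨_, _, .rcv₁ hr hs hrs ht hs'⟩
  | send c => exact ⟨_, _, .ext₁ (a := .send c) hr hs hrs trivial ht⟩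
  | recv c => exact ⟨_, _, .ext₁ (a := .recv c) hr hs hrs trivial ht⟩
  | tau => exact ⟨_, _, .tau₁ hr hs hrs ht fun _ => rfl⟩
  | delay d => exact (h1.not_tr_true_delay ht).elim

lemma par_comm_of_comm_right (h1 : IsTTSB X T1) (h2 : IsTTSB X T2) (hc : Compatible T1 T2)
    {r s : Valn Var Data} (hr : r ∈ T1.S) (hs : s ∈ T2.S) (hrs : compatV r s)
    (hcs : T2.Comm s) : (par T1 T2).Comm (override r s) := by
  obtain ⟨a, t, ht⟩ := hcs
  cases a with
  | bsend δ =>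
    have hz : dom t ∩ T1.V ⊆ T1.E := h2.statesDom t (h2.trMem ht).2 ▸ hc.inter_subset_E_left
    obtain ⟨b', r', hr'⟩ := h1.axV δ _ (h1.updV_mem hr hz)
    exact ⟨_, _, .snd₂ hr hs hrs ht hr'⟩
  | brecv δ =>
    obtain ⟨b', r', hr'⟩ := h1.axV δ r hr
    exact ⟨_, _, .rcv₂ hr hs hrs ht hr'⟩
  | send c => exact ⟨_, _, .ext₂ (a := .send c) hr hs hrs trivial ht⟩
  | recv c => exact ⟨_, _, .ext₂ (a := .recv c) hr hs hrs trivial ht⟩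
  | tau => exact ⟨_, _, .tau₂ hr hs hrs ht fun _ => rfl⟩
  | delay d => exact (h2.not_tr_true_delay ht).elim

end Par

/-- Lemma 3: a state of the composition is committed iff one of its component
states is committed. -/
theorem comm_par_iff (X : Set Var) (T1 T2 : PreTTSB Var Data BCh CCh)
    (h1 : IsTTSB X T1) (h2 : IsTTSB X T2) (hc : Compatible T1 T2)
    (r s : Valn Var Data) (hr : r ∈ T1.S) (hs : s ∈ T2.S) (hrs : compatV r s) :
    (par T1 T2).Comm (override r s) ↔ (T1.Comm r ∨ T2.Comm s) := by
  constructor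
  · rintro ⟨a, t, htr⟩
    obtain ⟨r₀, hr₀, s₀, hs₀, hrs₀, heq, hcomm⟩ := ParTr.exists_comm_of_tr_true h1 h2 hc htr
    obtain ⟨rfl, rfl⟩ := eq_of_override_eq_override
      ((h1.statesDom r₀ hr₀).trans (h1.statesDom r hr).symm)
      ((h2.statesDom s₀ hs₀).trans (h2.statesDom s hs).symm) hrs hrs₀ heq.symm
    exact hcomm
  · rintro (hcr | hcs)
    · exact par_comm_of_comm_left h1 h2 hc hr hs hrs hcr
    · exact par_comm_of_comm_right h1 h2 hc hr hs hrs hcs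

end TTSBpaper
end
end

section
/- Let A be a timed automaton satisfying Axioms VII–XI and let s be a state of TTSB(A). Then s(loc) is a committed location of A if and only if s is a committed state: s(loc) ∈ K ⟺ Comm(s). -/
open Classical

noncomputable section

namespace TTSBpaper

variable {Var Data BCh CCh : Type}

/-! Axiom IX gives, at a committed location, an edge enabled in `s|V` whose update lands in the
target invariant; as `ℓ ∉ V`, setting the location variable leaves that valuation intact, so rule ACT
fires with flag `true`. Conversely, only ACT yields transitions flagged `true`, and it sets the flag
exactly at committed locations. -/

section PartialFunctions

variable {α β : Type*}

lemma dom_restrictV (f : α → Option β) (X : Set α) : dom (restrictV f X) = dom f ∩ X := by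
  ext x
  by_cases hx : x ∈ X <;> simp [dom, restrictV, hx]

lemma updV_apply_of_mem {f g : α → Option β} {x : α} (hf : x ∈ dom f) (hg : x ∈ dom g) :
    updV f g x = g x := by
  simp [updV, restrictV, override, hf, hg]

lemma restrictV_updV_of_dom_subset {f g : α → Option β} (h : dom g ⊆ dom f) :
    restrictV (updV f g) (dom g) = g := by
  funext x
  by_cases hg : x ∈ dom g
  · simp only [restrictV, hg, if_true, updV_apply_of_mem (h hg) hg]
  · simp only [restrictV, hg, if_false]
    exact (not_not.mp hg).symm

lemma restrictV_updV_of_disjoint {f g : α → Option β} {X : Set α} (h : Disjoint X (dom g)) :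
    restrictV (updV f g) X = restrictV f X := by
  funext x
  by_cases hX : x ∈ X
  · have hg : x ∉ dom g := h.notMem_of_mem_left hX
    by_cases hf : x ∈ dom f
    · simp [restrictV, updV, override, hX, hf, hg]
    · simp_all [restrictV, updV, dom]
  · simp [restrictV, hX]

end PartialFunctions

lemma dom_single (x : Var) (v : Value Data) : dom (single x v) = {x} := by
  ext y
  by_cases hy : y = x <;> simp [dom, single, hy]

section TimedAutomata

variable {X : Set Var} {A : TA Var Data BCh CCh} {ℓ : Var} {s : Valn Var Data}

lemma dom_restrictV_of_mem_taState (hs : s ∈ taState A ℓ) : dom (restrictV s A.V) = A.V := by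
  rw [dom_restrictV, hs.1, Set.union_inter_cancel_left]

lemma restrictV_mem_inv_of_mem_taState {l : Data} (hs : s ∈ taState A ℓ)
    (hl : s ℓ = some (Sum.inr l)) : restrictV s A.V ∈ A.Inv l := by
  obtain ⟨-, l₀, -, hl₀, hinv⟩ := hs
  obtain rfl : l₀ = l := by simpa [hl] using hl₀.symm
  exact hinv

lemma updV_applyU_single_mem_taState (hA : TAok X A) (hfresh : ℓ ∉ A.V)
    (hs : s ∈ taState A ℓ) {l l' : Data} {g : Set (Valn Var Data)} {a : ELab BCh CCh}
    {ρ : Valn Var Data → Valn Var Data} (ht : A.Tr l g a ρ l')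
    (hinv : ρ (restrictV s A.V) ∈ A.Inv l') :
    updV (applyU A ρ s) (single ℓ (Sum.inr l')) ∈ taState A ℓ := by
  have hρ : dom (ρ (restrictV s A.V)) = A.V := hA.updDom ht _ (dom_restrictV_of_mem_taState hs)
  have hdom : dom (applyU A ρ s) = A.V ∪ {ℓ} := (dom_updV _ _).trans hs.1
  have hrestr : restrictV (applyU A ρ s) A.V = ρ (restrictV s A.V) := by
    have h := restrictV_updV_of_dom_subset (f := s) (g := ρ (restrictV s A.V))
      (by rw [hρ, hs.1]; exact Set.subset_union_left)
    rwa [hρ] at h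
  refine ⟨(dom_updV _ _).trans hdom, l', (hA.trLoc ht).2, ?_, ?_⟩
  · rw [updV_apply_of_mem (by simp [hdom]) (by simp [dom_single])]
    simp [single]
  · rwa [restrictV_updV_of_disjoint (by rwa [dom_single, Set.disjoint_singleton_right]),
      hrestr]

lemma comm_TTSBof_of_mem_K (hA : TAok X A) (hfresh : ℓ ∉ A.V) (hs : s ∈ taState A ℓ)
    {l : Data} (hl : s ℓ = some (Sum.inr l)) (hK : l ∈ A.K) : (TTSBof X A ℓ).Comm s := by
  obtain ⟨g, a, ρ, l', ht, hg, hinv⟩ := hA.axIX hK _ (dom_restrictV_of_mem_taState hs)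
    (restrictV_mem_inv_of_mem_taState hs hl)
  exact ⟨a.toAct, _, .act hs hl ht hg (iff_of_true rfl hK)
    (updV_applyU_single_mem_taState hA hfresh hs ht hinv)⟩

lemma mem_K_of_comm_TTSBof (hcomm : (TTSBof X A ℓ).Comm s) {l : Data}
    (hl : s ℓ = some (Sum.inr l)) : l ∈ A.K := by
  obtain ⟨_, _, htr⟩ := hcomm
  cases htr with
  | act _ hl' _ _ hb =>
    obtain rfl : l = _ := by simpa [hl] using hl'
    exact hb.mp rfl

end TimedAutomata

/-- Lemma 5: in the TTSB semantics of a TA, a state is committed iff the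
corresponding location is committed. -/
theorem committed_loc_iff (X : Set Var) (A : TA Var Data BCh CCh) (ℓ : Var)
    (hA : TAok X A) (hfresh : ℓ ∉ A.V)
    (s : Valn Var Data) (hs : s ∈ (TTSBof X A ℓ).S) (l : Data)
    (hl : s ℓ = some (Sum.inr l)) :
    l ∈ A.K ↔ (TTSBof X A ℓ).Comm s :=
  ⟨comm_TTSBof_of_mem_K hA hfresh hs hl, fun hcomm => mem_K_of_comm_TTSBof hcomm hl⟩

end TTSBpaper
end
end
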